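/- In Thompson's group T, for all integers i ≥ 1, j with 3 ≤ j ≤ i+1, and k with 0 ≤ k < j−2, one has x_{k+i-j+2} · c_i^j · x_k^{-1} = c_{i-1}^{j-1}. -/
import Mathlib


/-- Relators of the standard infinite presentation of Thompson's group `T`,
on generators `Sum.inl i ↦ x_i` and `Sum.inr i ↦ c_i`. -/
def TRel : Set (FreeGroup (ℕ ⊕ ℕ)) :=
  { r | (∃ i j : ℕ, i < j ∧
        r = FreeGroup.of (Sum.inl j) * FreeGroup.of (Sum.inl i) *
            (FreeGroup.of (Sum.inl i) * FreeGroup.of (Sum.inl (j + 1)))⁻¹) ∨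
    (∃ k n : ℕ, k < n ∧
        r = FreeGroup.of (Sum.inl k) * FreeGroup.of (Sum.inr (n + 1)) *
            (FreeGroup.of (Sum.inr n) * FreeGroup.of (Sum.inl (k + 1)))⁻¹) ∨
    (∃ n : ℕ, r = FreeGroup.of (Sum.inr n) * FreeGroup.of (Sum.inl 0) *
            ((FreeGroup.of (Sum.inr (n + 1))) ^ 2)⁻¹) ∨
    (∃ n : ℕ, r = FreeGroup.of (Sum.inr n) *
            (FreeGroup.of (Sum.inl n) * FreeGroup.of (Sum.inr (n + 1)))⁻¹) ∨
    (∃ n : ℕ, r = (FreeGroup.of (Sum.inr n)) ^ (n + 2)) }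

/-- Thompson's group `T`. -/
abbrev ThompsonT : Type := PresentedGroup TRel

/-- The generator `x_i` of `T`. -/
def x (i : ℕ) : ThompsonT := PresentedGroup.of (Sum.inl i)

/-- The torsion generator `c_i` of `T`. -/
def c (i : ℕ) : ThompsonT := PresentedGroup.of (Sum.inr i)

lemma relT {r : FreeGroup (ℕ ⊕ ℕ)} (h : r ∈ TRel) :
    (QuotientGroup.mk r : ThompsonT) = 1 := by
  rw [QuotientGroup.eq_one_iff]
  exact Subgroup.subset_normalClosure h

lemma rel2 (k n : ℕ) (h : k < n) : x k * c (n + 1) = c n * x (k + 1) := by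
  have h1 := relT (Or.inr (Or.inl ⟨k, n, h, rfl⟩))
  have h2 : (QuotientGroup.mk (FreeGroup.of (Sum.inl k) * FreeGroup.of (Sum.inr (n + 1)) *
      (FreeGroup.of (Sum.inr n) * FreeGroup.of (Sum.inl (k + 1)))⁻¹) : ThompsonT) =
      x k * c (n + 1) * (c n * x (k + 1))⁻¹ := rfl
  rw [h2] at h1
  exact mul_inv_eq_one.mp h1

lemma rel3 (n : ℕ) : c n * x 0 = c (n + 1) ^ 2 := by
  have h1 := relT (Or.inr (Or.inr (Or.inl ⟨n, rfl⟩)))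
  have h2 : (QuotientGroup.mk (FreeGroup.of (Sum.inr n) * FreeGroup.of (Sum.inl 0) *
      ((FreeGroup.of (Sum.inr (n + 1))) ^ 2)⁻¹) : ThompsonT) =
      c n * x 0 * (c (n + 1) ^ 2)⁻¹ := rfl
  rw [h2] at h1
  exact mul_inv_eq_one.mp h1

lemma rel4 (n : ℕ) : c n = x n * c (n + 1) := by
  have h1 := relT (Or.inr (Or.inr (Or.inr (Or.inl ⟨n, rfl⟩))))
  have h2 : (QuotientGroup.mk (FreeGroup.of (Sum.inr n) *
      (FreeGroup.of (Sum.inl n) * FreeGroup.of (Sum.inr (n + 1)))⁻¹) : ThompsonT) =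
      c n * (x n * c (n + 1))⁻¹ := rfl
  rw [h2] at h1
  exact mul_inv_eq_one.mp h1

lemma lemA (q : ℕ) : ∀ d : ℕ, c (q + d) ^ (q + 1) = x d * c (q + d + 1) ^ (q + 1) := by
  induction q with
  | zero => intro d; simpa using rel4 d
  | succ q ih =>
    intro d
    have e1 : c (q + 1 + d) ^ (q + 2) = c (q + d + 1) * c (q + (d + 1)) ^ (q + 1) := by
      rw [pow_succ']; ring_nf
    rw [e1, ih (d + 1)]
    have e2 : x d * c (q + d + 1 + 1) = c (q + d + 1) * x (d + 1) :=
      rel2 d (q + d + 1) (by omega)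
    calc c (q + d + 1) * (x (d + 1) * c (q + (d + 1) + 1) ^ (q + 1))
        = (c (q + d + 1) * x (d + 1)) * c (q + d + 2) ^ (q + 1) := by
          rw [mul_assoc]; ring_nf
      _ = x d * c (q + d + 2) * c (q + d + 2) ^ (q + 1) := by rw [← e2]
      _ = x d * c (q + 1 + d + 1) ^ (q + 2) := by
          rw [mul_assoc, ← pow_succ']; ring_nf

lemma lemB (k : ℕ) : ∀ q d : ℕ, k ≤ q →
    c (q + 1 + d) ^ (q + 2) * x k = x (k + d + 1) * c (q + 2 + d) ^ (q + 3) := by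
  induction k with
  | zero =>
    intro q d _
    have e1 : c (q + 1 + d) ^ (q + 2) * x 0 =
        c (q + (d + 1)) ^ (q + 1) * (c (q + 1 + d) * x 0) := by
      rw [pow_succ, mul_assoc]; ring_nf
    rw [e1, rel3 (q + 1 + d), lemA q (d + 1)]
    have h4 : q + 1 + d + 1 = q + 2 + d := by omega
    have h5 : q + (d + 1) + 1 = q + 2 + d := by omega
    rw [h4, h5, mul_assoc, ← pow_add]
    norm_num
  | succ k ih =>
    intro q d hk
    obtain ⟨q', rfl⟩ : ∃ q', q = q' + 1 := ⟨q - 1, by omega⟩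
    have e2 : x k * c (q' + 1 + 1 + d + 1) = c (q' + 1 + 1 + d) * x (k + 1) :=
      rel2 k (q' + 1 + 1 + d) (by omega)
    have e1 : c (q' + 1 + 1 + d) ^ (q' + 1 + 2) * x (k + 1) =
        c (q' + 1 + (d + 1)) ^ (q' + 2) * x k * c (q' + 2 + (d + 1)) := by
      rw [pow_succ, mul_assoc, ← e2, mul_assoc]; ring_nf
    rw [e1, ih q' (d + 1) (by omega)]
    rw [mul_assoc, ← pow_succ]
    have : q' + 2 + (d + 1) = q' + 1 + 2 + d := by omega
    rw [this]
    ring_nf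

/-- Reduction of type (3): for `i ≥ 1`, `3 ≤ j ≤ i + 1` and `0 ≤ k < j - 2`,
`x_{k+i-j+2} * c_i^j * x_k⁻¹ = c_{i-1}^{j-1}`.  (Since `j ≤ i + 1 ≤ k + i + 2`,
the index `k + i - j + 2` is the exact natural number `k + i + 2 - j`.) -/
theorem reduction_three (i j k : ℕ) (hi : 1 ≤ i) (hj : 3 ≤ j) (hji : j ≤ i + 1)
    (hk : k < j - 2) :
    x (k + i + 2 - j) * c i ^ j * (x k)⁻¹ = c (i - 1) ^ (j - 1) := by
  obtain ⟨q, rfl⟩ : ∃ q, j = q + 3 := ⟨j - 3, by omega⟩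
  obtain ⟨d, rfl⟩ : ∃ d, i = q + 2 + d := ⟨i - q - 2, by omega⟩
  have hB := lemB k q d (by omega)
  have e1 : k + (q + 2 + d) + 2 - (q + 3) = k + d + 1 := by omega
  have e2 : q + 2 + d - 1 = q + 1 + d := by omega
  have e3 : q + 3 - 1 = q + 2 := by omega
  rw [e1, e2, e3, ← hB]
  group
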